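/- The (α,β)-generating function of non-ambiguous trees satisfies the differential equation GFN(x,y;α,β) = (1 + α ∫_0^x GFN(u,y;α,1) du) · (1 + β ∫_0^y GFN(x,v;1,β) dv), as an identity of formal power series. -/

import Mathlib

/-!
A non-ambiguous tree is a pair of labellings, of the left and of the right children, each
strictly decreasing from ancestor to descendant. In a tree `node L R` the left children are the
root and left children of `L`, among which the root of `L` is an ancestor of all others and so
carries their largest label, together with the left children of `R`, none of which is comparable
with the former. The left labelling is therefore a shuffle of a labelling of `L` and one of `R`,
and likewise on the right, so that `#NAT(node L R) = C(i, i') C(j, j') #NAT(L) #NAT(R)`, where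
`i'` and `j'` count the left and right children of `node L R` lying in `L`.
In exponential generating functions this binomial convolution is a product. The left factor
enumerates the possible left subtrees `L`: its integral in `x` counts the root of `L` as one more
left child, and its `α` the one more vertex on the leftmost branch; symmetrically on the right.
-/

/-- Binary trees: `leaf` is the empty tree, `node l r` is a vertex with
left subtree `l` and right subtree `r`. -/
inductive BT : Type
  | leaf : BT
  | node : BT → BT → BT
  deriving DecidableEq

namespace BT

/-- The positions (vertices) of a binary tree, encoded as the lists of directions
(`false` = left, `true` = right) from the root. -/
def positions : BT → Finset (List Bool)
  | leaf => ∅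
  | node l r =>
      insert [] ((l.positions.image (List.cons false)) ∪ (r.positions.image (List.cons true)))

/-- Positions of the left children of a binary tree. -/
def leftPos (B : BT) : Finset (List Bool) := B.positions.filter (fun p => p.getLast? = some false)

/-- Positions of the right children of a binary tree. -/
def rightPos (B : BT) : Finset (List Bool) := B.positions.filter (fun p => p.getLast? = some true)

/-- The subtree rooted at a given position (the empty tree for invalid positions). -/
def subtreeAt : BT → List Bool → BT
  | t, [] => t
  | leaf, _ :: _ => leaf
  | node l r, b :: p => (if b then r else l).subtreeAt p

end BT

/-- A non-ambiguous tree of shape `B`: a labelling of the left (resp. right) children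
of `B` by `0, …, |LV(B)|-1` (resp. `0, …, |RV(B)|-1`), bijectively, such that the label
of a strict ancestor is strictly greater than the label of a descendant (among left
children, resp. among right children).  A vertex `p` is a strict ancestor of `q`
exactly when `p` is a proper prefix of `q`. -/
structure NAT (B : BT) where
  labL : {p : List Bool // p ∈ B.leftPos} → Fin B.leftPos.card
  labR : {p : List Bool // p ∈ B.rightPos} → Fin B.rightPos.card
  bijL : Function.Bijective labL
  bijR : Function.Bijective labR
  ancL : ∀ p q : {p : List Bool // p ∈ B.leftPos}, p.1 <+: q.1 → p.1 ≠ q.1 → labL q < labL p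
  ancR : ∀ p q : {p : List Bool // p ∈ B.rightPos}, p.1 <+: q.1 → p.1 ≠ q.1 → labR q < labR p

instance (B : BT) : Finite (NAT B) := by
  have h : Function.Injective (fun T : NAT B => (T.labL, T.labR)) := by
    intro T₁ T₂ h
    cases T₁
    cases T₂
    simp only [Prod.mk.injEq] at h
    obtain ⟨h1, h2⟩ := h
    subst h1
    subst h2
    rfl
  exact Finite.of_injective _ h

noncomputable instance (B : BT) : Fintype (NAT B) := Fintype.ofFinite _
namespace BT

/-- Number of vertices on the leftmost branch of a binary tree (root included). -/
def ldepth : BT → ℕ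
  | leaf => 0
  | node l _ => l.ldepth + 1

/-- Number of vertices on the rightmost branch of a binary tree (root included). -/
def rdepth : BT → ℕ
  | leaf => 0
  | node _ r => r.rdepth + 1

/-- `LO`: the number of non-root vertices on the leftmost branch. -/
def lo (B : BT) : ℕ := B.ldepth - 1

/-- `RO`: the number of non-root vertices on the rightmost branch. -/
def ro (B : BT) : ℕ := B.rdepth - 1

end BT

/-- The coefficient ring `ℚ[α,β]`, with `α = X 0` and `β = X 1`. -/
abbrev Rab := MvPolynomial (Fin 2) ℚ

/-- The `(α,β)`-generating function of nonempty non-ambiguous trees, at given values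
`a`, `b` of the parameters `α`, `β`: the coefficient of `x^i y^j` is
`(1/(i!j!)) ∑_T a^{LO(T)} b^{RO(T)}`, the sum ranging over nonempty NATs `T` with
`|LV(T)| = i` and `|RV(T)| = j`. -/
noncomputable def GFNab (a b : Rab) : MvPowerSeries (Fin 2) Rab := fun d =>
  ((((d 0).factorial : ℚ) * ((d 1).factorial : ℚ))⁻¹) •
    ∑ᶠ T : {T : Σ B : BT, NAT B //
        T.1 ≠ BT.leaf ∧ T.1.leftPos.card = d 0 ∧ T.1.rightPos.card = d 1},
      a ^ T.1.1.lo * b ^ T.1.1.ro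

/-- Formal integral `∫_0^x f(u,y) du` on `ℚ[α,β][[x,y]]`. -/
noncomputable def iX (f : MvPowerSeries (Fin 2) Rab) : MvPowerSeries (Fin 2) Rab :=
  fun d => if d 0 = 0 then 0 else ((d 0 : ℚ))⁻¹ • f (d - Finsupp.single 0 1)

/-- Formal integral `∫_0^y f(x,v) dv` on `ℚ[α,β][[x,y]]`. -/
noncomputable def iY (f : MvPowerSeries (Fin 2) Rab) : MvPowerSeries (Fin 2) Rab :=
  fun d => if d 1 = 0 then 0 else ((d 1 : ℚ))⁻¹ • f (d - Finsupp.single 1 1)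

open Finset

section DecLabelling

variable {α β : Type*} (r : α → α → Prop)

/-- Labellings of `s` by `0, …, #s - 1` that decrease strictly along `r`. -/
def DecLabelling (s : Finset α) : Type _ :=
  {f : s ≃ Fin #s // ∀ p q : s, r p q → f q < f p}

instance (s : Finset α) : Finite (DecLabelling r s) := by
  unfold DecLabelling; infer_instance

theorem card_decLabelling_empty : Nat.card (DecLabelling r ∅) = 1 := by
  have : IsEmpty (Fin #(∅ : Finset α)) := inferInstanceAs (IsEmpty (Fin 0))
  have : Unique (DecLabelling r ∅) :=
    { default := ⟨Equiv.equivOfIsEmpty _ _, fun p => isEmptyElim p⟩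
      uniq := fun f => Subtype.ext (Equiv.ext fun p => isEmptyElim p) }
  exact Nat.card_unique

variable {r} in
theorem card_decLabelling_image [DecidableEq β] (r' : β → β → Prop) {f : α → β}
    (hf : Function.Injective f) (hr : ∀ p q, r' (f p) (f q) ↔ r p q) (s : Finset α) :
    Nat.card (DecLabelling r' (s.image f)) = Nat.card (DecLabelling r s) := by
  rw [← show s.map ⟨f, hf⟩ = s.image f from map_eq_image _ _]
  obtain ⟨e, he⟩ : ∃ e : s ≃ s.map ⟨f, hf⟩, ∀ x, (e x : β) = f x :=
    ⟨equivMap _ s, fun _ => rfl⟩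
  refine (Nat.card_congr (Equiv.subtypeEquiv (e.equivCongr (finCongr (card_map _).symm)) ?_)).symm
  refine fun g => ⟨fun hg p q hpq => ?_, fun hg p q hpq => ?_⟩
  · obtain ⟨p, rfl⟩ := e.surjective p
    obtain ⟨q, rfl⟩ := e.surjective q
    rw [he, he, hr] at hpq
    simpa only [Equiv.equivCongr_apply_apply, Equiv.symm_apply_apply, Fin.lt_def, finCongr_apply,
      Fin.val_cast] using hg p q hpq
  · simpa only [Equiv.equivCongr_apply_apply, Equiv.symm_apply_apply, Fin.lt_def, finCongr_apply,
      Fin.val_cast] using hg (e p) (e q) (by rw [he, he, hr]; exact hpq)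

theorem bijective_of_injective_fin {s : Finset α} {n : ℕ} {f : s → Fin n}
    (hf : Function.Injective f) (hn : #s = n) : Function.Bijective f :=
  hf.bijective_of_nat_card_le (by simp [hn])

namespace DecLabelling

variable {r} {s : Finset α} {m : α}

theorem card_top_eq_zero (hm : m ∈ s) {p : α} (hp : p ∈ s) (hpm : r p m) :
    Nat.card {f : DecLabelling r s // (f.1 ⟨m, hm⟩ : ℕ) = #s - 1} = 0 := by
  have : IsEmpty {f : DecLabelling r s // (f.1 ⟨m, hm⟩ : ℕ) = #s - 1} := ⟨fun f => by
    have h1 := f.1.2 ⟨p, hp⟩ ⟨m, hm⟩ hpm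
    have h2 := (f.1.1 ⟨p, hp⟩).isLt
    rw [Fin.lt_def, f.2] at h1
    omega⟩
  exact Nat.card_of_isEmpty

variable [DecidableEq α]

theorem val_lt_card_erase (f : DecLabelling r s) (hm : m ∈ s)
    (htop : (f.1 ⟨m, hm⟩ : ℕ) = #s - 1) (p : s.erase m) :
    (f.1 ⟨p, mem_of_mem_erase p.2⟩ : ℕ) < #(s.erase m) := by
  have hne : f.1 ⟨p, mem_of_mem_erase p.2⟩ ≠ f.1 ⟨m, hm⟩ :=
    f.1.injective.ne fun h => ne_of_mem_erase p.2 (congrArg Subtype.val h)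
  have := (f.1 ⟨p, mem_of_mem_erase p.2⟩).isLt
  rw [Ne, Fin.ext_iff, htop] at hne
  rw [card_erase_of_mem hm]
  omega

noncomputable def eraseTop (f : DecLabelling r s) (hm : m ∈ s)
    (htop : (f.1 ⟨m, hm⟩ : ℕ) = #s - 1) : DecLabelling r (s.erase m) :=
  ⟨Equiv.ofBijective
    (fun p => ⟨f.1 ⟨p, mem_of_mem_erase p.2⟩, val_lt_card_erase f hm htop p⟩)
    (bijective_of_injective_fin (fun _ _ h =>
      Subtype.ext (Subtype.mk.inj (f.1.injective (Fin.ext (Fin.mk.inj h))))) rfl),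
    fun _ _ hpq => f.2 _ _ hpq⟩

def insertTopFun (g : DecLabelling r (s.erase m)) (hm : m ∈ s) (p : s) : Fin #s :=
  if h : p.1 = m then ⟨#s - 1, Nat.sub_one_lt (card_ne_zero_of_mem hm)⟩
  else Fin.castLE card_erase_le (g.1 ⟨p, mem_erase.2 ⟨h, p.2⟩⟩)

theorem insertTopFun_self (g : DecLabelling r (s.erase m)) (hm : m ∈ s) :
    (insertTopFun g hm ⟨m, hm⟩ : ℕ) = #s - 1 := by
  simp [insertTopFun]

theorem insertTopFun_of_ne (g : DecLabelling r (s.erase m)) (hm : m ∈ s) {p : s} (h : p.1 ≠ m) :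
    (insertTopFun g hm p : ℕ) = g.1 ⟨p, mem_erase.2 ⟨h, p.2⟩⟩ := by
  simp [insertTopFun, h]

theorem insertTopFun_lt_self (g : DecLabelling r (s.erase m)) (hm : m ∈ s) {p : s}
    (h : p.1 ≠ m) : insertTopFun g hm p < insertTopFun g hm ⟨m, hm⟩ := by
  rw [Fin.lt_def, insertTopFun_of_ne g hm h, insertTopFun_self, ← card_erase_of_mem hm]
  exact Fin.isLt _

theorem insertTopFun_injective (g : DecLabelling r (s.erase m)) (hm : m ∈ s) :
    Function.Injective (insertTopFun g hm) := by
  intro p q h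
  by_cases hp : p.1 = m <;> by_cases hq : q.1 = m
  · exact Subtype.ext (hp.trans hq.symm)
  · obtain rfl : p = ⟨m, hm⟩ := Subtype.ext hp
    exact absurd h (insertTopFun_lt_self g hm hq).ne'
  · obtain rfl : q = ⟨m, hm⟩ := Subtype.ext hq
    exact absurd h (insertTopFun_lt_self g hm hp).ne
  · rw [Fin.ext_iff, insertTopFun_of_ne g hm hp, insertTopFun_of_ne g hm hq] at h
    exact Subtype.ext (Subtype.mk.inj (g.1.injective (Fin.ext h)))

theorem insertTopFun_lt (g : DecLabelling r (s.erase m)) (hm : m ∈ s)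
    (hmax : ∀ p ∈ s, ¬ r p m) (p q : s) (hpq : r p q) :
    insertTopFun g hm q < insertTopFun g hm p := by
  have hq : q.1 ≠ m := fun h => hmax p p.2 (h ▸ hpq)
  by_cases hp : p.1 = m
  · obtain rfl : p = ⟨m, hm⟩ := Subtype.ext hp
    exact insertTopFun_lt_self g hm hq
  · rw [Fin.lt_def, insertTopFun_of_ne g hm hp, insertTopFun_of_ne g hm hq]
    exact g.2 ⟨p, _⟩ ⟨q, _⟩ hpq

noncomputable def insertTop (g : DecLabelling r (s.erase m)) (hm : m ∈ s)
    (hmax : ∀ p ∈ s, ¬ r p m) : DecLabelling r s :=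
  ⟨Equiv.ofBijective _ (bijective_of_injective_fin (insertTopFun_injective g hm) rfl),
    insertTopFun_lt g hm hmax⟩

theorem card_top_eq (hm : m ∈ s) (hmax : ∀ p ∈ s, ¬ r p m) :
    Nat.card {f : DecLabelling r s // (f.1 ⟨m, hm⟩ : ℕ) = #s - 1} =
      Nat.card (DecLabelling r (s.erase m)) := by
  refine Nat.card_congr
    { toFun := fun f => eraseTop f.1 hm f.2
      invFun := fun g => ⟨insertTop g hm hmax, insertTopFun_self g hm⟩
      left_inv := fun f => Subtype.ext (Subtype.ext (Equiv.ext fun p => Fin.ext ?_))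
      right_inv := fun g =>
        Subtype.ext (Equiv.ext fun p => Fin.ext (insertTopFun_of_ne g hm (ne_of_mem_erase p.2))) }
  by_cases hp : p.1 = m
  · obtain rfl : p = ⟨m, hm⟩ := Subtype.ext hp
    exact (insertTopFun_self _ hm).trans f.2.symm
  · exact insertTopFun_of_ne _ hm hp

end DecLabelling

/-- Sort the labellings by the element carrying the top label `#s - 1`, which has to be
`r`-maximal. -/
theorem card_decLabelling_eq_sum [DecidableEq α] [DecidableRel r] {s : Finset α}
    (hs : s.Nonempty) : Nat.card (DecLabelling r s) =
      ∑ m ∈ s with ∀ p ∈ s, ¬ r p m, Nat.card (DecLabelling r (s.erase m)) := by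
  let top : Fin #s := ⟨#s - 1, Nat.sub_one_lt (card_ne_zero.2 hs)⟩
  have hfiber (m : s) : Nat.card {f : DecLabelling r s // f.1.symm top = m} =
      if ∀ p ∈ s, ¬ r p m then Nat.card (DecLabelling r (s.erase m)) else 0 := by
    rw [Nat.card_congr (Equiv.subtypeEquivRight fun f => by
      rw [Equiv.symm_apply_eq, eq_comm, Fin.ext_iff])]
    split_ifs with hmax
    · exact DecLabelling.card_top_eq m.2 hmax
    · obtain ⟨p, hp, hpm⟩ : ∃ p ∈ s, r p m := by simpa using hmax
      exact DecLabelling.card_top_eq_zero m.2 hp hpm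
  rw [← Nat.card_congr (Equiv.sigmaFiberEquiv fun f : DecLabelling r s => f.1.symm top),
    Nat.card_sigma, sum_filter, ← sum_coe_sort s]
  exact sum_congr rfl fun m _ => hfiber m

theorem card_decLabelling_insert [DecidableEq α] [DecidableRel r] {s : Finset α} {t : α}
    (ht : t ∉ s) (htop : ∀ p ∈ s, r t p) (hmax : ∀ p ∈ insert t s, ¬ r p t) :
    Nat.card (DecLabelling r (insert t s)) = Nat.card (DecLabelling r s) := by
  have hfilter : {m ∈ insert t s | ∀ p ∈ insert t s, ¬ r p m} = {t} := by
    ext m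
    simp only [mem_filter, mem_singleton]
    refine ⟨fun ⟨hm, hm'⟩ => ?_, by rintro rfl; exact ⟨mem_insert_self _ s, hmax⟩⟩
    rcases mem_insert.1 hm with rfl | hm
    · rfl
    · exact absurd (htop m hm) (hm' t (mem_insert_self t s))
  rw [card_decLabelling_eq_sum r (insert_nonempty t s), hfilter, sum_singleton, erase_insert ht]

theorem sum_card_decLabelling_erase_union [DecidableEq α] [DecidableRel r] {s t : Finset α}
    (hst : Disjoint s t) (hr : ∀ p ∈ s, ∀ q ∈ t, ¬ r p q ∧ ¬ r q p) (hs : s.Nonempty)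
    (c : ℕ) (h : ∀ m ∈ s, Nat.card (DecLabelling r (s.erase m ∪ t)) =
      c * (Nat.card (DecLabelling r (s.erase m)) * Nat.card (DecLabelling r t))) :
    ∑ m ∈ s with ∀ p ∈ s ∪ t, ¬ r p m, Nat.card (DecLabelling r ((s ∪ t).erase m)) =
      c * (Nat.card (DecLabelling r s) * Nat.card (DecLabelling r t)) := by
  have hmax : ∀ m ∈ s, ((∀ p ∈ s ∪ t, ¬ r p m) ↔ ∀ p ∈ s, ¬ r p m) := fun m hm =>
    ⟨fun h p hp => h p (mem_union_left t hp), fun h p hp =>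
      (mem_union.1 hp).elim (h p) fun hp => (hr m hm p hp).2⟩
  rw [filter_congr hmax, card_decLabelling_eq_sum r hs, sum_mul, mul_sum]
  refine sum_congr rfl fun m hm => ?_
  have hm := (mem_filter.1 hm).1
  rw [erase_union_distrib, erase_eq_of_notMem (disjoint_left.1 hst hm), h m hm]

/-- Pascal's rule: the top label goes to a maximal element of `s` or of `t`. -/
theorem card_decLabelling_union [DecidableEq α] [DecidableRel r] (s t : Finset α)
    (hst : Disjoint s t) (hr : ∀ p ∈ s, ∀ q ∈ t, ¬ r p q ∧ ¬ r q p) :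
    Nat.card (DecLabelling r (s ∪ t)) =
      (#s + #t).choose #s * (Nat.card (DecLabelling r s) * Nat.card (DecLabelling r t)) := by
  induction hn : #s + #t using Nat.strong_induction_on generalizing s t with | _ n ih =>
  subst hn
  rcases s.eq_empty_or_nonempty with rfl | hs
  · simp [card_decLabelling_empty]
  rcases t.eq_empty_or_nonempty with rfl | ht
  · simp [card_decLabelling_empty]
  have sum_s := sum_card_decLabelling_erase_union r hst hr hs ((#s - 1 + #t).choose (#s - 1))
    fun m hm => by
      have := card_erase_lt_of_mem hm
      rw [ih _ (by omega) _ _ (disjoint_of_subset_left (erase_subset m s) hst)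
        (fun p hp => hr p (mem_of_mem_erase hp)) rfl, card_erase_of_mem hm]
  have sum_t := sum_card_decLabelling_erase_union r hst.symm (fun q hq p hp => (hr p hp q hq).symm)
    ht ((#s + (#t - 1)).choose #s) fun m hm => by
      have := card_erase_lt_of_mem hm
      rw [union_comm, ih _ (by omega) _ _ (disjoint_of_subset_right (erase_subset m t) hst)
        (fun p hp q hq => hr p hp q (mem_of_mem_erase hq)) rfl, card_erase_of_mem hm,
        mul_comm (Nat.card (DecLabelling r s))]
  rw [union_comm t s] at sum_t
  rw [card_decLabelling_eq_sum r (hs.mono subset_union_left), filter_union,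
    sum_union (disjoint_filter_filter hst), sum_s, sum_t, mul_comm (Nat.card (DecLabelling r t)),
    ← add_mul]
  obtain ⟨a, ha⟩ : ∃ a, #s = a + 1 := Nat.exists_eq_add_one.2 (card_pos.2 hs)
  obtain ⟨b, hb⟩ : ∃ b, #t = b + 1 := Nat.exists_eq_add_one.2 (card_pos.2 ht)
  rw [ha, hb, Nat.add_sub_cancel, Nat.add_sub_cancel, show a + 1 + (b + 1) = a + b + 1 + 1 by ring,
    Nat.choose_succ_succ', show a + (b + 1) = a + b + 1 by ring, show a + 1 + b = a + b + 1 by ring]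

end DecLabelling

/-- The strict ancestor relation between positions. -/
def StrictPrefix {α : Type*} (p q : List α) : Prop := p <+: q ∧ p ≠ q

instance {α : Type*} [DecidableEq α] : DecidableRel (StrictPrefix (α := α)) :=
  fun _ _ => inferInstanceAs (Decidable (_ ∧ _))

section StrictPrefix

variable {α : Type*} [DecidableEq α]

theorem disjoint_image_cons {a b : α} (hab : a ≠ b) (s t : Finset (List α)) :
    Disjoint (s.image (List.cons a)) (t.image (List.cons b)) := by
  simp [disjoint_left, hab.symm]

theorem card_decLabelling_image_cons (a : α) (s : Finset (List α)) :
    Nat.card (DecLabelling StrictPrefix (s.image (List.cons a))) =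
      Nat.card (DecLabelling StrictPrefix s) :=
  card_decLabelling_image _ List.cons_injective (fun p q => by
    simp [StrictPrefix, List.cons_prefix_cons]) s

theorem card_decLabelling_insert_nil {s : Finset (List α)} (hs : [] ∉ s) :
    Nat.card (DecLabelling StrictPrefix (insert [] s)) = Nat.card (DecLabelling StrictPrefix s) :=
  card_decLabelling_insert _ hs (fun _ hp => ⟨List.nil_prefix, fun h => hs (h ▸ hp)⟩)
    (fun _ _ h => h.2 (List.prefix_nil.1 h.1))

theorem card_decLabelling_cons_union {a b : α} (hab : a ≠ b) (s t : Finset (List α)) :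
    Nat.card (DecLabelling StrictPrefix (s.image (List.cons a) ∪ t.image (List.cons b))) =
      (#s + #t).choose #s *
        (Nat.card (DecLabelling StrictPrefix s) * Nat.card (DecLabelling StrictPrefix t)) := by
  have hinc : ∀ p ∈ s.image (List.cons a), ∀ q ∈ t.image (List.cons b),
      ¬ StrictPrefix p q ∧ ¬ StrictPrefix q p := by
    simp only [mem_image]
    rintro _ ⟨p, -, rfl⟩ _ ⟨q, -, rfl⟩
    simp [StrictPrefix, List.cons_prefix_cons, hab, hab.symm]
  rw [card_decLabelling_union _ _ _ (disjoint_image_cons hab s t) hinc,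
    card_image_of_injective _ List.cons_injective, card_image_of_injective _ List.cons_injective,
    card_decLabelling_image_cons, card_decLabelling_image_cons]

end StrictPrefix

namespace BT

@[simp] theorem node_ne_leaf (L R : BT) : node L R ≠ leaf := nofun

theorem positions_node (L R : BT) : (node L R).positions =
    insert [] (L.positions.image (List.cons false) ∪ R.positions.image (List.cons true)) := rfl

theorem nil_mem_positions {B : BT} : [] ∈ B.positions ↔ B ≠ leaf := by
  cases B <;> simp [positions]

theorem nil_notMem_leftPos (B : BT) : [] ∉ B.leftPos := by
  simp [leftPos]

theorem nil_notMem_rightPos (B : BT) : [] ∉ B.rightPos := by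
  simp [rightPos]

/-- The root and the left children. -/
def nonRightPos (B : BT) : Finset (List Bool) := B.positions.filter (·.getLast? ≠ some true)

/-- The root and the right children. -/
def nonLeftPos (B : BT) : Finset (List Bool) := B.positions.filter (·.getLast? ≠ some false)

theorem leftPos_node (L R : BT) : (node L R).leftPos =
    L.nonRightPos.image (List.cons false) ∪ R.leftPos.image (List.cons true) := by
  simp only [leftPos, nonRightPos, positions_node, filter_insert, filter_union, filter_image,
    List.getLast?_nil, reduceCtorEq, if_false, List.getLast?_cons]
  congr 2 <;> refine filter_congr fun p _ => ?_ <;> cases p.getLast? <;> simp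

theorem rightPos_node (L R : BT) : (node L R).rightPos =
    L.rightPos.image (List.cons false) ∪ R.nonLeftPos.image (List.cons true) := by
  simp only [rightPos, nonLeftPos, positions_node, filter_insert, filter_union, filter_image,
    List.getLast?_nil, reduceCtorEq, if_false, List.getLast?_cons]
  congr 2 <;> refine filter_congr fun p _ => ?_ <;> cases p.getLast? <;> simp

theorem nonRightPos_eq_insert {B : BT} (hB : B ≠ leaf) : B.nonRightPos = insert [] B.leftPos := by
  ext p
  rcases p.eq_nil_or_concat with rfl | ⟨q, b, rfl⟩
  · simp [nonRightPos, nil_mem_positions.2 hB]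
  · cases b <;> simp [nonRightPos, leftPos]

theorem nonLeftPos_eq_insert {B : BT} (hB : B ≠ leaf) : B.nonLeftPos = insert [] B.rightPos := by
  ext p
  rcases p.eq_nil_or_concat with rfl | ⟨q, b, rfl⟩
  · simp [nonLeftPos, nil_mem_positions.2 hB]
  · cases b <;> simp [nonLeftPos, rightPos]

theorem card_nonRightPos (B : BT) : #B.nonRightPos = #B.leftPos + if B = leaf then 0 else 1 := by
  split_ifs with hB
  · subst hB; rfl
  · rw [nonRightPos_eq_insert hB, card_insert_of_notMem (nil_notMem_leftPos B)]

theorem card_nonLeftPos (B : BT) : #B.nonLeftPos = #B.rightPos + if B = leaf then 0 else 1 := by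
  split_ifs with hB
  · subst hB; rfl
  · rw [nonLeftPos_eq_insert hB, card_insert_of_notMem (nil_notMem_rightPos B)]

theorem card_leftPos_node (L R : BT) : #(node L R).leftPos = #L.nonRightPos + #R.leftPos := by
  rw [leftPos_node, card_union_of_disjoint (disjoint_image_cons Bool.false_ne_true _ _),
    card_image_of_injective _ List.cons_injective, card_image_of_injective _ List.cons_injective]

theorem card_rightPos_node (L R : BT) : #(node L R).rightPos = #L.rightPos + #R.nonLeftPos := by
  rw [rightPos_node, card_union_of_disjoint (disjoint_image_cons Bool.false_ne_true _ _),
    card_image_of_injective _ List.cons_injective, card_image_of_injective _ List.cons_injective]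

theorem card_decLabelling_nonRightPos (B : BT) :
    Nat.card (DecLabelling StrictPrefix B.nonRightPos) =
      Nat.card (DecLabelling StrictPrefix B.leftPos) := by
  cases B with
  | leaf => rfl
  | node L R =>
    rw [nonRightPos_eq_insert (node_ne_leaf L R),
      card_decLabelling_insert_nil (nil_notMem_leftPos _)]

theorem card_decLabelling_nonLeftPos (B : BT) :
    Nat.card (DecLabelling StrictPrefix B.nonLeftPos) =
      Nat.card (DecLabelling StrictPrefix B.rightPos) := by
  cases B with
  | leaf => rfl
  | node L R =>
    rw [nonLeftPos_eq_insert (node_ne_leaf L R),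
      card_decLabelling_insert_nil (nil_notMem_rightPos _)]

theorem lo_node (L R : BT) : (node L R).lo = L.ldepth := rfl

theorem ro_node (L R : BT) : (node L R).ro = R.rdepth := rfl

theorem ldepth_eq_lo_add_one {B : BT} (hB : B ≠ leaf) : B.ldepth = B.lo + 1 := by
  cases B
  exacts [absurd rfl hB, rfl]

theorem rdepth_eq_ro_add_one {B : BT} (hB : B ≠ leaf) : B.rdepth = B.ro + 1 := by
  cases B
  exacts [absurd rfl hB, rfl]

end BT

noncomputable def NAT.equivDecLabelling (B : BT) :
    NAT B ≃ DecLabelling StrictPrefix B.leftPos × DecLabelling StrictPrefix B.rightPos where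
  toFun T := (⟨.ofBijective T.labL T.bijL, fun p q h => T.ancL p q h.1 h.2⟩,
    ⟨.ofBijective T.labR T.bijR, fun p q h => T.ancR p q h.1 h.2⟩)
  invFun f := ⟨f.1.1, f.2.1, f.1.1.bijective, f.2.1.bijective,
    fun p q h h' => f.1.2 p q ⟨h, h'⟩, fun p q h h' => f.2.2 p q ⟨h, h'⟩⟩
  left_inv _ := rfl
  right_inv _ :=
    Prod.ext (Subtype.ext (Equiv.ext fun _ => rfl)) (Subtype.ext (Equiv.ext fun _ => rfl))

theorem card_NAT (B : BT) : Nat.card (NAT B) = Nat.card (DecLabelling StrictPrefix B.leftPos) *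
    Nat.card (DecLabelling StrictPrefix B.rightPos) := by
  rw [Nat.card_congr (NAT.equivDecLabelling B), Nat.card_prod]

theorem card_NAT_leaf : Nat.card (NAT .leaf) = 1 := by
  rw [card_NAT, BT.leftPos, BT.rightPos, BT.positions, filter_empty, filter_empty,
    card_decLabelling_empty]

theorem card_NAT_node (L R : BT) : Nat.card (NAT (.node L R)) =
    (#L.nonRightPos + #R.leftPos).choose #L.nonRightPos *
      (#L.rightPos + #R.nonLeftPos).choose #L.rightPos * (Nat.card (NAT L) * Nat.card (NAT R)) := by
  rw [card_NAT, BT.leftPos_node, BT.rightPos_node, card_decLabelling_cons_union Bool.false_ne_true,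
    card_decLabelling_cons_union Bool.false_ne_true, BT.card_decLabelling_nonRightPos,
    BT.card_decLabelling_nonLeftPos, card_NAT, card_NAT]
  ring

namespace BT

def numNodes : BT → ℕ
  | leaf => 0
  | node l r => l.numNodes + r.numNodes + 1

theorem numNodes_eq (B : BT) :
    B.numNodes = #B.leftPos + #B.rightPos + if B = leaf then 0 else 1 := by
  induction B with
  | leaf => rfl
  | node L R ihL ihR =>
    rw [numNodes, ihL, ihR, card_leftPos_node, card_rightPos_node, card_nonRightPos,
      card_nonLeftPos, if_neg (node_ne_leaf L R)]
    ring

def upTo : ℕ → Finset BT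
  | 0 => {leaf}
  | n + 1 => insert leaf ((upTo n ×ˢ upTo n).image fun p => node p.1 p.2)

theorem mem_upTo {B : BT} {n : ℕ} (h : B.numNodes ≤ n) : B ∈ upTo n := by
  induction n generalizing B with
  | zero => cases B <;> simp_all [upTo, numNodes]
  | succ n ih =>
    cases B with
    | leaf => simp [upTo]
    | node L R =>
      simp only [numNodes] at h
      exact mem_insert_of_mem (mem_image.2
        ⟨(L, R), mem_product.2 ⟨ih (B := L) (by omega), ih (B := R) (by omega)⟩, rfl⟩)

/-- The exponent of `x^|LV(B)| y^|RV(B)|`. -/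
noncomputable def degree (B : BT) : Fin 2 →₀ ℕ :=
  Finsupp.single 0 #B.leftPos + Finsupp.single 1 #B.rightPos

/-- The part of the degree of `node L R` contributed by its left subtree `L`, root included. -/
noncomputable def leftDegree (L : BT) : Fin 2 →₀ ℕ :=
  Finsupp.single 0 #L.nonRightPos + Finsupp.single 1 #L.rightPos

noncomputable def rightDegree (R : BT) : Fin 2 →₀ ℕ :=
  Finsupp.single 0 #R.leftPos + Finsupp.single 1 #R.nonLeftPos

@[simp] theorem leftDegree_zero (L : BT) : L.leftDegree 0 = #L.nonRightPos := by simp [leftDegree]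

@[simp] theorem leftDegree_one (L : BT) : L.leftDegree 1 = #L.rightPos := by simp [leftDegree]

@[simp] theorem rightDegree_zero (R : BT) : R.rightDegree 0 = #R.leftPos := by simp [rightDegree]

@[simp] theorem rightDegree_one (R : BT) : R.rightDegree 1 = #R.nonLeftPos := by
  simp [rightDegree]

@[simp] theorem leftDegree_leaf : leaf.leftDegree = 0 := by
  simp [leftDegree, nonRightPos, rightPos, positions]

@[simp] theorem rightDegree_leaf : leaf.rightDegree = 0 := by
  simp [rightDegree, nonLeftPos, leftPos, positions]

theorem leftDegree_of_ne_leaf {B : BT} (hB : B ≠ leaf) :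
    B.leftDegree = B.degree + Finsupp.single 0 1 := by
  ext i
  fin_cases i <;> simp [degree, card_nonRightPos, hB]

theorem rightDegree_of_ne_leaf {B : BT} (hB : B ≠ leaf) :
    B.rightDegree = B.degree + Finsupp.single 1 1 := by
  ext i
  fin_cases i <;> simp [degree, card_nonLeftPos, hB]

theorem degree_node (L R : BT) : (node L R).degree = L.leftDegree + R.rightDegree := by
  ext i
  fin_cases i <;> simp [degree, card_leftPos_node, card_rightPos_node]

/-- `upTo (d 0 + d 1 + 1)` contains all trees of degree `d` for `degree`, `leftDegree` and
`rightDegree`. -/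
noncomputable def ofDegree (deg : BT → Fin 2 →₀ ℕ) (d : Fin 2 →₀ ℕ) : Finset BT :=
  (upTo (d 0 + d 1 + 1)).filter (deg · = d)

theorem mem_ofDegree {deg : BT → Fin 2 →₀ ℕ}
    (hdeg : ∀ B, B.numNodes ≤ deg B 0 + deg B 1 + 1) {d : Fin 2 →₀ ℕ} {B : BT} :
    B ∈ ofDegree deg d ↔ deg B = d :=
  ⟨fun h => (mem_filter.1 h).2, fun h => mem_filter.2 ⟨mem_upTo (h ▸ hdeg B), h⟩⟩

theorem mem_ofDegree_degree {d : Fin 2 →₀ ℕ} {B : BT} :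
    B ∈ ofDegree degree d ↔ B.degree = d :=
  mem_ofDegree fun B => by rw [numNodes_eq]; simp [degree]; split_ifs <;> omega

theorem mem_ofDegree_leftDegree {d : Fin 2 →₀ ℕ} {B : BT} :
    B ∈ ofDegree leftDegree d ↔ B.leftDegree = d :=
  mem_ofDegree fun B => by rw [numNodes_eq]; simp [card_nonRightPos]; split_ifs <;> omega

theorem mem_ofDegree_rightDegree {d : Fin 2 →₀ ℕ} {B : BT} :
    B ∈ ofDegree rightDegree d ↔ B.rightDegree = d :=
  mem_ofDegree fun B => by rw [numNodes_eq]; simp [card_nonLeftPos]; split_ifs <;> omega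

theorem ofDegree_leftDegree (e : Fin 2 →₀ ℕ) : ofDegree leftDegree e =
    if e 0 = 0 then (if e = 0 then {leaf} else ∅)
    else (ofDegree degree (e - Finsupp.single 0 1)).erase leaf := by
  ext B
  rw [mem_ofDegree_leftDegree]
  cases B with
  | leaf =>
    split_ifs with h0 h
    · simp [h]
    · simp [Ne.symm h]
    · simpa using fun h : 0 = e => h0 (h ▸ rfl)
  | node L R =>
    rw [leftDegree_of_ne_leaf (node_ne_leaf L R)]
    split_ifs with h0
    · simpa using fun h => by simpa [h0] using DFunLike.congr_fun h 0
    · simpa using fun h => by simpa [h0] using DFunLike.congr_fun h 0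
    · rw [mem_erase, mem_ofDegree_degree,
        eq_tsub_iff_add_eq_of_le (by simpa [Nat.one_le_iff_ne_zero])]
      simp

theorem ofDegree_rightDegree (e : Fin 2 →₀ ℕ) : ofDegree rightDegree e =
    if e 1 = 0 then (if e = 0 then {leaf} else ∅)
    else (ofDegree degree (e - Finsupp.single 1 1)).erase leaf := by
  ext B
  rw [mem_ofDegree_rightDegree]
  cases B with
  | leaf =>
    split_ifs with h1 h
    · simp [h]
    · simp [Ne.symm h]
    · simpa using fun h : 0 = e => h1 (h ▸ rfl)
  | node L R =>
    rw [rightDegree_of_ne_leaf (node_ne_leaf L R)]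
    split_ifs with h1
    · simpa using fun h => by simpa [h1] using DFunLike.congr_fun h 1
    · simpa using fun h => by simpa [h1] using DFunLike.congr_fun h 1
    · rw [mem_erase, mem_ofDegree_degree,
        eq_tsub_iff_add_eq_of_le (by simpa [Nat.one_le_iff_ne_zero])]
      simp

theorem erase_leaf_ofDegree_degree (d : Fin 2 →₀ ℕ) : (ofDegree degree d).erase leaf =
    ((antidiagonal d).sigma fun p => ofDegree leftDegree p.1 ×ˢ ofDegree rightDegree p.2).image
      fun x => node x.2.1 x.2.2 := by
  ext B
  simp only [mem_erase, mem_ofDegree_degree, mem_image, mem_sigma, mem_product,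
    HasAntidiagonal.mem_antidiagonal, mem_ofDegree_leftDegree, mem_ofDegree_rightDegree]
  cases B with
  | leaf => simp
  | node L R =>
    refine ⟨fun ⟨_, h⟩ => ⟨⟨(L.leftDegree, R.rightDegree), (L, R)⟩, ?_, rfl⟩, ?_⟩
    · simp [← h, degree_node]
    · rintro ⟨⟨p, L', R'⟩, ⟨hp, hL, hR⟩, h⟩
      cases h
      simpa [degree_node, hL, hR] using hp

theorem sum_erase_leaf_ofDegree_degree {M : Type*} [AddCommMonoid M] (F : BT → M)
    (d : Fin 2 →₀ ℕ) : ∑ B ∈ (ofDegree degree d).erase leaf, F B =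
      ∑ p ∈ antidiagonal d, ∑ x ∈ ofDegree leftDegree p.1 ×ˢ ofDegree rightDegree p.2,
        F (node x.1 x.2) := by
  rw [erase_leaf_ofDegree_degree, sum_image, sum_sigma]
  rintro ⟨p, L, R⟩ hx ⟨p', L', R'⟩ hx' h
  simp only [coe_sigma, Set.mem_sigma_iff, mem_coe, mem_product, mem_ofDegree_leftDegree,
    mem_ofDegree_rightDegree] at hx hx'
  cases h
  obtain ⟨-, hL, hR⟩ := hx
  obtain ⟨-, hL', hR'⟩ := hx'
  rw [Prod.ext (hL.symm.trans hL') (hR.symm.trans hR')]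

end BT

theorem Finsupp.single_add_single_eq_iff_fin_two {a b : ℕ} {d : Fin 2 →₀ ℕ} :
    Finsupp.single 0 a + Finsupp.single 1 b = d ↔ a = d 0 ∧ b = d 1 := by
  refine ⟨fun h => h ▸ by simp, fun ⟨ha, hb⟩ => ?_⟩
  ext i
  fin_cases i <;> simp [ha, hb]

theorem MvPowerSeries.coeff_one_add_C_mul {σ R : Type*} [Semiring R] [DecidableEq σ] (a : R)
    (f : MvPowerSeries σ R) (e : σ →₀ ℕ) :
    (1 + C a * f : MvPowerSeries σ R) e = (if e = 0 then 1 else 0) + a * f e := by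
  change coeff e (1 + C a * f) = _
  rw [map_add, coeff_one, coeff_C_mul, coeff_apply]

theorem inv_natCast_mul_inv_factorial_pred {n : ℕ} (hn : n ≠ 0) (m : ℕ) :
    (n : ℚ)⁻¹ * (((n - 1).factorial : ℚ) * m.factorial)⁻¹ =
      ((n.factorial : ℚ) * m.factorial)⁻¹ := by
  rw [← Nat.mul_factorial_pred hn, Nat.cast_mul, mul_inv, mul_inv, mul_inv, mul_assoc]

theorem inv_factorial_mul_choose (a b : ℕ) :
    (((a + b).factorial : ℚ))⁻¹ * (a + b).choose a =
      ((a.factorial : ℚ))⁻¹ * ((b.factorial : ℚ))⁻¹ := by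
  rw [← Nat.add_choose_mul_factorial_mul_factorial, Nat.choose_symm_add]
  push_cast
  field_simp
  exact div_self (Nat.cast_ne_zero.2 (Nat.choose_pos (Nat.le_add_left b a)).ne')

theorem GFNab_apply (a b : Rab) (d : Fin 2 →₀ ℕ) :
    GFNab a b d = (((d 0).factorial : ℚ) * (d 1).factorial)⁻¹ •
      ∑ B ∈ (BT.ofDegree BT.degree d).erase .leaf,
        Nat.card (NAT B) • (a ^ B.lo * b ^ B.ro) := by
  have hS (B : BT) : (B ≠ .leaf ∧ #B.leftPos = d 0 ∧ #B.rightPos = d 1) ↔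
      B ∈ (BT.ofDegree BT.degree d).erase .leaf := by
    rw [mem_erase, BT.mem_ofDegree_degree, BT.degree, Finsupp.single_add_single_eq_iff_fin_two]
  let e := (Equiv.subtypeSigmaEquiv NAT _).trans
    (Equiv.sigmaCongrLeft' (Equiv.subtypeEquivRight hS))
  rw [GFNab, ← finsum_comp_equiv e.symm, finsum_eq_sum_of_fintype, Fintype.sum_sigma]
  refine congrArg _ ((sum_congr rfl fun B _ => ?_).trans (sum_coe_sort _ _))
  change ∑ _ : NAT B, a ^ B.1.lo * b ^ B.1.ro = _
  rw [sum_const, card_univ, Nat.card_eq_fintype_card]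

theorem coeff_leftFactor (e : Fin 2 →₀ ℕ) :
    (1 + MvPowerSeries.C (MvPolynomial.X 0) * iX (GFNab (MvPolynomial.X 0) 1) :
        MvPowerSeries (Fin 2) Rab) e =
      (((e 0).factorial : ℚ) * (e 1).factorial)⁻¹ •
        ∑ L ∈ BT.ofDegree BT.leftDegree e,
          Nat.card (NAT L) • (MvPolynomial.X 0 : Rab) ^ L.ldepth := by
  rw [MvPowerSeries.coeff_one_add_C_mul, BT.ofDegree_leftDegree]
  by_cases h0 : e 0 = 0
  · simp only [iX, if_pos h0, mul_zero, add_zero]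
    split_ifs with he
    · simp [he, card_NAT_leaf, BT.ldepth, -Nat.card_eq_fintype_card]
    · simp
  · have he : e ≠ 0 := fun h => h0 (by simp [h])
    have hsub0 : (e - Finsupp.single 0 1 : Fin 2 →₀ ℕ) 0 = e 0 - 1 := by simp
    have hsub1 : (e - Finsupp.single 0 1 : Fin 2 →₀ ℕ) 1 = e 1 := by simp
    rw [iX, if_neg h0, if_neg he, if_neg h0, zero_add, GFNab_apply, hsub0, hsub1, smul_smul,
      inv_natCast_mul_inv_factorial_pred h0, mul_smul_comm, mul_sum]
    refine congrArg _ (sum_congr rfl fun B hB => ?_)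
    rw [one_pow, mul_one, mul_smul_comm, BT.ldepth_eq_lo_add_one (mem_erase.1 hB).1, pow_succ',
      mul_comm]

theorem coeff_rightFactor (e : Fin 2 →₀ ℕ) :
    (1 + MvPowerSeries.C (MvPolynomial.X 1) * iY (GFNab 1 (MvPolynomial.X 1)) :
        MvPowerSeries (Fin 2) Rab) e =
      (((e 0).factorial : ℚ) * (e 1).factorial)⁻¹ •
        ∑ R ∈ BT.ofDegree BT.rightDegree e,
          Nat.card (NAT R) • (MvPolynomial.X 1 : Rab) ^ R.rdepth := by
  rw [MvPowerSeries.coeff_one_add_C_mul, BT.ofDegree_rightDegree]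
  by_cases h1 : e 1 = 0
  · simp only [iY, if_pos h1, mul_zero, add_zero]
    split_ifs with he
    · simp [he, card_NAT_leaf, BT.rdepth, -Nat.card_eq_fintype_card]
    · simp
  · have he : e ≠ 0 := fun h => h1 (by simp [h])
    have hsub0 : (e - Finsupp.single 1 1 : Fin 2 →₀ ℕ) 0 = e 0 := by simp
    have hsub1 : (e - Finsupp.single 1 1 : Fin 2 →₀ ℕ) 1 = e 1 - 1 := by simp
    rw [iY, if_neg h1, if_neg he, if_neg h1, zero_add, GFNab_apply, hsub0, hsub1, smul_smul,
      mul_comm ((e 0).factorial : ℚ), inv_natCast_mul_inv_factorial_pred h1,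
      mul_comm ((e 1).factorial : ℚ), mul_smul_comm, mul_sum]
    refine congrArg _ (sum_congr rfl fun B hB => ?_)
    rw [one_pow, one_mul, mul_smul_comm, BT.rdepth_eq_ro_add_one (mem_erase.1 hB).1, pow_succ',
      mul_comm]

theorem smul_card_NAT_node (a b : Rab) (L R : BT) :
    (((((L.leftDegree + R.rightDegree) 0).factorial : ℚ) *
        ((L.leftDegree + R.rightDegree) 1).factorial)⁻¹ •
      Nat.card (NAT (.node L R)) • (a ^ (BT.node L R).lo * b ^ (BT.node L R).ro)) =
    ((((L.leftDegree 0).factorial : ℚ) * (L.leftDegree 1).factorial)⁻¹ *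
        (((R.rightDegree 0).factorial : ℚ) * (R.rightDegree 1).factorial)⁻¹) •
      (Nat.card (NAT L) • a ^ L.ldepth * Nat.card (NAT R) • b ^ R.rdepth) := by
  have h0 := inv_factorial_mul_choose #L.nonRightPos #R.leftPos
  have h1 := inv_factorial_mul_choose #L.rightPos #R.nonLeftPos
  rw [card_NAT_node, BT.lo_node, BT.ro_node, Finsupp.add_apply, Finsupp.add_apply,
    BT.leftDegree_zero, BT.leftDegree_one, BT.rightDegree_zero, BT.rightDegree_one,
    smul_mul_smul_comm, ← Nat.cast_smul_eq_nsmul ℚ, ← Nat.cast_smul_eq_nsmul ℚ, smul_smul,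
    smul_smul]
  congr 1
  push_cast
  rw [mul_inv, ← mul_assoc,
    mul_mul_mul_comm _ _ _ ((#L.rightPos + #R.nonLeftPos).choose #L.rightPos : ℚ), h0, h1]
  ring

/-- The `(α,β)`-generating function of non-ambiguous trees satisfies
`GFN(x,y;α,β) = (1 + α∫₀ˣ GFN(u,y;α,1) du)(1 + β∫₀^y GFN(x,v;1,β) dv)`. -/
theorem stmt5 :
    GFNab (MvPolynomial.X 0) (MvPolynomial.X 1) =
      (1 + (MvPowerSeries.C : Rab →+* MvPowerSeries (Fin 2) Rab) (MvPolynomial.X 0) * iX (GFNab (MvPolynomial.X 0) 1)) *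
      (1 + (MvPowerSeries.C : Rab →+* MvPowerSeries (Fin 2) Rab) (MvPolynomial.X 1) * iY (GFNab 1 (MvPolynomial.X 1))) := by
  ext1 d
  rw [MvPowerSeries.coeff_mul, MvPowerSeries.coeff_apply, GFNab_apply,
    BT.sum_erase_leaf_ofDegree_degree, smul_sum]
  refine sum_congr rfl fun p hp => ?_
  rw [MvPowerSeries.coeff_apply, MvPowerSeries.coeff_apply, coeff_leftFactor, coeff_rightFactor,
    smul_mul_smul_comm, sum_mul_sum, ← sum_product', smul_sum, smul_sum]
  refine sum_congr rfl fun x hx => ?_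
  obtain ⟨hL, hR⟩ := mem_product.1 hx
  rw [BT.mem_ofDegree_leftDegree] at hL
  rw [BT.mem_ofDegree_rightDegree] at hR
  rw [← HasAntidiagonal.mem_antidiagonal.1 hp, ← hL, ← hR, smul_card_NAT_node]
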